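/- The map T(r, a, δφ, δF, δφF) = (19 − r, a + 2δF − 1, δφF, 1 − δF, δφ) restricts to a bijection from the set of F3-admissible tuples with δF = 0 onto the set of F3-admissible tuples with δF = 1, and each of these two sets has exactly 51 elements. (The two sets are the lists of invariants in Figures 1 and 2 of the paper, for δF = 0 and δF = 1 respectively.) -/

import Mathlib

/-- The invariants `(r, a, δφ, δF, δφF)` of the paper, with `r, a` integers and
`δφ, δF, δφF ∈ {0,1}`, satisfying conditions 0.1--0.7 and I.1--I.8 of the
`𝔽₃` case. -/
def F3Admissible : ℤ × ℤ × ℤ × ℤ × ℤ → Prop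
  | (r, a, dphi, dF, dphiF) =>
    (dphi = 0 ∨ dphi = 1) ∧ (dF = 0 ∨ dF = 1) ∧ (dphiF = 0 ∨ dphiF = 1) ∧
    (1 ≤ r ∧ r ≤ 18) ∧ (0 ≤ a ∧ a ≤ r ∧ a ≤ 20 - r) ∧
    (r + a ≡ 0 [ZMOD 2]) ∧ (dphi = 0 → r ≡ 2 [ZMOD 4]) ∧
    (a = 0 → dphi = 0 ∧ r ≡ 2 [ZMOD 8]) ∧
    (a = 1 → (r ≡ 1 [ZMOD 8] ∨ r ≡ 3 [ZMOD 8])) ∧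
    (a = 2 ∧ r ≡ 6 [ZMOD 8] → dphi = 0) ∧
    (a = r ∧ dphi = 0 → r ≡ 2 [ZMOD 8]) ∧
    (a = 20 - r ∧ dphi = 0 → r ≡ 2 [ZMOD 8]) ∧
    (dF = 0 → dphi = 1) ∧
    (dphiF = 0 → dF = 0 ∧ dphi = 1 ∧ r ≡ 1 [ZMOD 4]) ∧
    (a = 20 - r → dF = 0) ∧
    (a = 20 - r ∧ dphiF = 0 → r ≡ 1 [ZMOD 8]) ∧
    (a = 0 → dF = 1) ∧
    (a = 1 ∧ dF = 0 → dphiF = 0 ∧ r ≡ 1 [ZMOD 8]) ∧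
    (a = 2 ∧ dF = 0 → (r ≡ 0 [ZMOD 8] ∨ r ≡ 2 [ZMOD 8])) ∧
    (a = 3 ∧ dF = 0 ∧ r ≡ 5 [ZMOD 8] → dphiF = 0)


/-- The map `T(r, a, δφ, δF, δφF) = (19 − r, a + 2δF − 1, δφF, 1 − δF, δφ)`
encoding the passage from `φ` to the related involution `φ̃ = τφ`. -/
def F3Related : ℤ × ℤ × ℤ × ℤ × ℤ → ℤ × ℤ × ℤ × ℤ × ℤ
  | (r, a, dphi, dF, dphiF) => (19 - r, a + 2 * dF - 1, dphiF, 1 - dF, dphi)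

/-
The map `T` is an involution that exchanges `δF = 0` and `δF = 1`, and it preserves
admissibility: once the three bits are fixed, each condition on `T t` is a linear
congruence condition on `r` and `a` implied by those on `t`. Hence `T` is a bijection
between the two layers, which therefore have the same size; that size, 51, is found by
enumerating the box `1 ≤ r ≤ 18`, `0 ≤ a ≤ 19` in which all admissible tuples lie.
-/

instance : DecidablePred F3Admissible := fun ⟨_, _, _, _, _⟩ => by
  dsimp only [F3Admissible]
  infer_instance

def F3Layer (c : ℤ) : Set (ℤ × ℤ × ℤ × ℤ × ℤ) :=
  {t | F3Admissible t ∧ t.2.2.2.1 = c}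

theorem F3Related_involutive : Function.Involutive F3Related := by
  rintro ⟨r, a, dphi, dF, dphiF⟩
  simp only [F3Related, Prod.mk.injEq, true_and, and_true]
  omega

theorem F3Admissible.related {t : ℤ × ℤ × ℤ × ℤ × ℤ} (ht : F3Admissible t) :
    F3Admissible (F3Related t) := by
  obtain ⟨r, a, dphi, dF, dphiF⟩ := t
  obtain ⟨hphi, hF, hphiF, hconds⟩ := ht
  simp only [F3Admissible, F3Related, Int.ModEq] at hconds ⊢
  rcases hphi with rfl | rfl <;> rcases hF with rfl | rfl <;> rcases hphiF with rfl | rfl <;>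
    simp only [one_ne_zero, false_and, and_false, false_implies, true_and, and_true,
      forall_const, implies_true, or_true, true_or, imp_false, not_false_eq_true] at hconds ⊢ <;>
    and_intros <;> omega

theorem mapsTo_F3Related_F3Layer (c : ℤ) :
    Set.MapsTo F3Related (F3Layer c) (F3Layer (1 - c)) := by
  rintro ⟨r, a, dphi, dF, dphiF⟩ ⟨ht, rfl⟩
  exact ⟨ht.related, rfl⟩

theorem bijOn_F3Related_F3Layer_zero_one :
    Set.BijOn F3Related (F3Layer 0) (F3Layer 1) :=
  have hinv : Set.InvOn F3Related F3Related (F3Layer 0) (F3Layer 1) :=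
    ⟨fun t _ => F3Related_involutive t, fun t _ => F3Related_involutive t⟩
  hinv.bijOn (mapsTo_F3Related_F3Layer 0) (mapsTo_F3Related_F3Layer 1)

noncomputable def F3Box : Finset (ℤ × ℤ × ℤ × ℤ × ℤ) :=
  Finset.Icc 1 18 ×ˢ Finset.Icc 0 19 ×ˢ {0, 1} ×ˢ {0, 1} ×ˢ {0, 1}

theorem F3Admissible.mem_F3Box {t : ℤ × ℤ × ℤ × ℤ × ℤ} (ht : F3Admissible t) : t ∈ F3Box := by
  obtain ⟨r, a, dphi, dF, dphiF⟩ := t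
  obtain ⟨hphi, hF, hphiF, hr, ha, -⟩ := ht
  simp only [F3Box, Finset.mem_product, Finset.mem_Icc, Finset.mem_insert, Finset.mem_singleton]
  exact ⟨hr, ⟨ha.1, by omega⟩, hphi, hF, hphiF⟩

theorem F3Layer_eq_filter (c : ℤ) :
    F3Layer c = ↑(F3Box.filter fun t => F3Admissible t ∧ t.2.2.2.1 = c) := by
  ext t
  rw [Finset.coe_filter]
  exact ⟨fun ht => ⟨ht.1.mem_F3Box, ht⟩, And.right⟩

theorem ncard_F3Layer_zero : (F3Layer 0).ncard = 51 := by
  rw [F3Layer_eq_filter, Set.ncard_coe_finset]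
  decide

/-- `T` restricts to a bijection from the set of `𝔽₃`-admissible tuples with
`δF = 0` onto the set of those with `δF = 1`, and each of these two sets
(the lists of invariants of Figures 1 and 2 of the paper) has exactly
51 elements. -/
theorem F3Related_bijOn_and_card :
    Set.BijOn F3Related
      {t : ℤ × ℤ × ℤ × ℤ × ℤ | F3Admissible t ∧ t.2.2.2.1 = 0}
      {t : ℤ × ℤ × ℤ × ℤ × ℤ | F3Admissible t ∧ t.2.2.2.1 = 1} ∧
    Set.ncard {t : ℤ × ℤ × ℤ × ℤ × ℤ | F3Admissible t ∧ t.2.2.2.1 = 0} = 51 ∧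
    Set.ncard {t : ℤ × ℤ × ℤ × ℤ × ℤ | F3Admissible t ∧ t.2.2.2.1 = 1} = 51 :=
  ⟨bijOn_F3Related_F3Layer_zero_one, ncard_F3Layer_zero,
    bijOn_F3Related_F3Layer_zero_one.ncard_eq ▸ ncard_F3Layer_zero⟩
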